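/- For strings u, v over an alphabet of size a ≥ 2 with lengths between k₁ and k₂ where k₁ < k₂, there exists a path in the Levenshtein graph L_{k₁,k₂;a} from u to v of length exactly ℓ(u,v), visiting only vertices whose lengths lie between k₁ and k₂. In particular L_{k₁,k₂;a} is connected. -/

import Mathlib

/-- A cost structure for Levenshtein edit distance (removed from Mathlib; restored with its old meaning). -/
structure Levenshtein.Cost (α β δ : Type*) where
  /-- Cost to delete an element from a list. -/
  delete : α → δ
  /-- Cost in insert an element into a list. -/
  insert : β → δ
  /-- Cost to substitute one element for another in a list. -/
  substitute : α → β → δ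

/-- The default cost structure, for which all operations cost `1`. -/
def Levenshtein.defaultCost {α : Type*} [DecidableEq α] : Levenshtein.Cost α α ℕ where
  delete _ := 1
  insert _ := 1
  substitute a b := if a = b then 0 else 1

/-- (Internal implementation detail, as in the old Mathlib.) -/
def Levenshtein.impl {α β δ : Type*} (C : Levenshtein.Cost α β δ) [AddZeroClass δ] [Min δ]
    (xs : List α) (y : β) (d : {r : List δ // 0 < r.length}) :
    {r : List δ // 0 < r.length} :=
  let ⟨ds, w⟩ := d
  xs.zip (ds.zip ds.tail) |>.foldr
    (init := ⟨[ds.getLast (List.ne_nil_of_length_pos w) + C.insert y], by simp⟩)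
    (fun ⟨x, d₀, d₁⟩ ⟨r, w⟩ =>
      ⟨min (C.delete x + r[0]) (min (C.insert y + d₀) (C.substitute x y + d₁)) :: r, by simp⟩)

/-- `suffixLevenshtein C xs ys` computes the Levenshtein distance
(using the cost functions provided by a `C : Cost α β δ`)
from each suffix of the list `xs` to the list `ys`. -/
def suffixLevenshtein {α β δ : Type*} (C : Levenshtein.Cost α β δ) [AddZeroClass δ] [Min δ]
    (xs : List α) (ys : List β) : {r : List δ // 0 < r.length} :=
  ys.foldr
    (Levenshtein.impl C xs)
    (xs.foldr (init := ⟨[0], by simp⟩) (fun a ⟨r, w⟩ => ⟨(C.delete a + r[0]) :: r, by simp⟩))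

/-- `levenshtein C xs ys` computes the Levenshtein distance
(using the cost functions provided by a `C : Cost α β δ`)
from the list `xs` to the list `ys`. -/
def levenshtein {α β δ : Type*} (C : Levenshtein.Cost α β δ) [AddZeroClass δ] [Min δ]
    (xs : List α) (ys : List β) : δ :=
  let ⟨r, w⟩ := suffixLevenshtein C xs ys
  r[0]

/-- Vertices of the Levenshtein graph: strings over `Fin a` of length between `k₁` and `k₂`. -/
def LevVertex (a k₁ k₂ : ℕ) := {w : List (Fin a) // k₁ ≤ w.length ∧ w.length ≤ k₂}

/-- The Levenshtein graph `L_{k₁,k₂;a}`: two strings are adjacent iff their edit distance is 1. -/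
def levGraph (a k₁ k₂ : ℕ) : SimpleGraph (LevVertex a k₁ k₂) :=
  SimpleGraph.fromRel (fun u v => levenshtein Levenshtein.defaultCost u.1 v.1 = 1)

/-!
If `x ≠ y`, some branch of the recurrence for `lev (a :: x) (b :: y)` realises the minimum, and
the corresponding edit (or, when the heads agree, a step found recursively on the tails) gives a
neighbour `z` of `x` with `lev z y + 1 = lev x y`. Following the realised branch, `z` can be chosen
no shorter than `x` when `|x| ≤ |y|`, and no longer than `x` when `|y| ≤ |x|`. Since `k₁ < k₂`,
one of the two choices keeps `|z|` in `[k₁, k₂]`, and iterating gives a walk of length `lev x y`.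
-/

open Levenshtein

section GeneralCost

variable {α β δ : Type*} (C : Levenshtein.Cost α β δ) [AddZeroClass δ] [Min δ]

theorem Levenshtein.impl_cons (x : α) (xs : List α) (y : β) (d : δ) (ds : List δ)
    (w : 0 < (d :: ds).length) (w' : 0 < ds.length) :
    impl C (x :: xs) y ⟨d :: ds, w⟩ =
      ⟨min (C.delete x + (impl C xs y ⟨ds, w'⟩).1[0]'(impl C xs y ⟨ds, w'⟩).2)
          (min (C.insert y + d) (C.substitute x y + ds[0])) :: (impl C xs y ⟨ds, w'⟩).1,
        by simp⟩ :=
  match ds, w' with | _ :: _, _ => rfl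

theorem suffixLevenshtein_cons_left (x : α) (xs : List α) (ys : List β) :
    suffixLevenshtein C (x :: xs) ys =
      ⟨levenshtein C (x :: xs) ys :: (suffixLevenshtein C xs ys).1, by simp⟩ := by
  induction ys with
  | nil => rfl
  | cons y ys ih =>
    have htail : (suffixLevenshtein C (x :: xs) (y :: ys)).1.tail =
        (suffixLevenshtein C xs (y :: ys)).1 := by
      change (impl C (x :: xs) y (suffixLevenshtein C (x :: xs) ys)).1.tail = _
      rw [ih, impl_cons C x xs y _ _ _ (suffixLevenshtein C xs ys).2]
      rfl
    change _ = (⟨((suffixLevenshtein C (x :: xs) (y :: ys)).1[0]'(suffixLevenshtein ..).2) :: _,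
      by simp⟩ : {r : List δ // 0 < r.length})
    generalize suffixLevenshtein C (x :: xs) (y :: ys) = s at htail ⊢
    obtain ⟨_ | ⟨_, _⟩, hs⟩ := s
    · simp at hs
    · simp_all

theorem levenshtein_cons_cons (x : α) (xs : List α) (y : β) (ys : List β) :
    levenshtein C (x :: xs) (y :: ys) =
      min (C.delete x + levenshtein C xs (y :: ys))
        (min (C.insert y + levenshtein C (x :: xs) ys)
          (C.substitute x y + levenshtein C xs ys)) := by
  change (impl C (x :: xs) y (suffixLevenshtein C (x :: xs) ys)).1[0]'(impl ..).2 = _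
  rw [suffixLevenshtein_cons_left, impl_cons C x xs y _ _ _ (suffixLevenshtein C xs ys).2]
  rfl

theorem levenshtein_nil_cons (y : β) (ys : List β) :
    levenshtein C ([] : List α) (y :: ys) = levenshtein C [] ys + C.insert y := by
  cases ys <;> rfl

theorem levenshtein_cons_nil (x : α) (xs : List α) :
    levenshtein C (x :: xs) ([] : List β) = C.delete x + levenshtein C xs [] :=
  rfl

end GeneralCost

section DefaultCost

variable {α : Type*} [DecidableEq α]

local notation "lev" => levenshtein (Levenshtein.defaultCost (α := α))

theorem lev_cons_cons (a b : α) (x y : List α) :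
    lev (a :: x) (b :: y) =
      min (1 + lev x (b :: y)) (min (1 + lev (a :: x) y) ((if a = b then 0 else 1) + lev x y)) :=
  levenshtein_cons_cons ..

theorem lev_nil_left (y : List α) : lev [] y = y.length := by
  induction y with
  | nil => rfl
  | cons b y ih => rw [levenshtein_nil_cons, ih]; rfl

theorem lev_nil_right (x : List α) : lev x [] = x.length := by
  induction x with
  | nil => rfl
  | cons a x ih => rw [levenshtein_cons_nil, ih]; exact Nat.add_comm 1 _

theorem lev_self (x : List α) : lev x x = 0 := by
  induction x with
  | nil => rfl
  | cons a x ih => simp [lev_cons_cons, ih]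

theorem eq_of_lev_eq_zero : ∀ {x y : List α}, lev x y = 0 → x = y
  | [], y, h => by simpa [lev_nil_left] using h
  | _ :: _, [], h => by simp [lev_nil_right] at h
  | a :: x, b :: y, h => by
    rw [lev_cons_cons] at h
    have hab : a = b := by by_contra hab; simp [hab] at h
    subst hab
    rw [if_pos rfl] at h
    rw [eq_of_lev_eq_zero (show lev x y = 0 by omega)]

theorem lev_cons_le (a : α) (x y : List α) : lev (a :: x) y ≤ lev x y + 1 := by
  cases y with
  | nil => simp [lev_nil_right]
  | cons b y => rw [lev_cons_cons]; omega

theorem lev_le_cons (b : α) (x y : List α) : lev x (b :: y) ≤ lev x y + 1 := by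
  cases x with
  | nil => simp [lev_nil_left]
  | cons a x => rw [lev_cons_cons]; omega

theorem length_le_lev : ∀ x y : List α,
    y.length ≤ x.length + lev x y ∧ x.length ≤ y.length + lev x y
  | [], y => by simp [lev_nil_left]
  | _ :: _, [] => by simp [lev_nil_right]
  | a :: x, b :: y => by
    have h₁ := length_le_lev x (b :: y)
    have h₂ := length_le_lev (a :: x) y
    have h₃ := length_le_lev x y
    simp only [lev_cons_cons, List.length_cons] at *
    split_ifs at * <;> omega

theorem lev_le_length_add_length (x y : List α) : lev x y ≤ x.length + y.length := by
  induction x with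
  | nil => simp [lev_nil_left]
  | cons a x ih => have := lev_cons_le a x y; simp only [List.length_cons]; omega

theorem lev_triangle : ∀ x y z : List α, lev x z ≤ lev x y + lev y z
  | x, [], z => by
    rw [lev_nil_right x, lev_nil_left z]; exact lev_le_length_add_length x z
  | [], _ :: _, z => by
    rw [lev_nil_left, lev_nil_left]; exact (length_le_lev _ z).1
  | a :: x, b :: y, [] => by
    rw [lev_nil_right, lev_nil_right]; have := (length_le_lev (a :: x) (b :: y)).2; omega
  | a :: x, b :: y, c :: z => by
    have h₁ := lev_triangle x (b :: y) (c :: z)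
    have h₂ := lev_triangle (a :: x) (b :: y) z
    have h₃ := lev_triangle (a :: x) y (c :: z)
    have h₄ := lev_triangle (a :: x) y z
    have h₅ := lev_triangle x y (c :: z)
    have h₆ := lev_triangle x y z
    have h₇ := lev_cons_le a x (c :: z)
    have h₈ := lev_le_cons c (a :: x) z
    simp only [lev_cons_cons] at *
    split_ifs at * <;> subst_vars <;> first | omega | exact absurd rfl ‹_›
termination_by x y z => x.length + y.length + z.length

theorem lev_eq_zero_iff {x y : List α} : lev x y = 0 ↔ x = y :=
  ⟨eq_of_lev_eq_zero, fun h => h ▸ lev_self x⟩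

theorem lev_cons_self (c : α) (x : List α) : lev (c :: x) x = 1 := by
  have := lev_cons_le c x x
  have := lev_eq_zero_iff.not.mpr (List.cons_ne_self c x)
  rw [lev_self] at *
  omega

theorem lev_self_cons (c : α) (x : List α) : lev x (c :: x) = 1 := by
  have := lev_le_cons c x x
  have := lev_eq_zero_iff.not.mpr (List.cons_ne_self c x).symm
  rw [lev_self] at *
  omega

theorem lev_cons_cons_of_ne_self {a b : α} (hab : a ≠ b) (x : List α) :
    lev (a :: x) (b :: x) = 1 := by
  have := lev_eq_zero_iff.not.mpr (by simp [hab] : a :: x ≠ b :: x)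
  rw [lev_cons_cons, if_neg hab, lev_self] at *
  omega

theorem lev_cons_cons_self (c : α) (x y : List α) : lev (c :: x) (c :: y) = lev x y := by
  have h₁ := lev_triangle x (c :: y) y
  have h₂ := lev_triangle x (c :: x) y
  rw [lev_cons_self] at h₁
  rw [lev_self_cons] at h₂
  rw [lev_cons_cons, if_pos rfl]
  omega

theorem lev_cons_cons_of_ne {a b : α} (hab : a ≠ b) (x y : List α) :
    lev (a :: x) (b :: y) = lev x (b :: y) + 1 ∨ lev (a :: x) (b :: y) = lev (a :: x) y + 1 ∨
      lev (a :: x) (b :: y) = lev x y + 1 := by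
  rw [lev_cons_cons, if_neg hab]
  omega

def IsGeodesicStep (x z y : List α) : Prop :=
  lev x z = 1 ∧ lev z y + 1 = lev x y

namespace IsGeodesicStep

variable {x y z : List α}

theorem cons (c : α) (h : IsGeodesicStep x z y) : IsGeodesicStep (c :: x) (c :: z) (c :: y) := by
  simpa only [IsGeodesicStep, lev_cons_cons_self] using h

theorem extend_target {y' : List α} (h : IsGeodesicStep x z y') (hy : lev y' y ≤ 1)
    (hx : lev x y = lev x y' + 1) : IsGeodesicStep x z y := by
  obtain ⟨hxz, hzy'⟩ := h
  have := lev_triangle x z y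
  have := lev_triangle z y' y
  exact ⟨hxz, by omega⟩

end IsGeodesicStep

theorem isGeodesicStep_delete {a : α} {x y : List α} (h : lev (a :: x) y = lev x y + 1) :
    IsGeodesicStep (a :: x) x y :=
  ⟨lev_cons_self a x, h.symm⟩

theorem isGeodesicStep_insert {b : α} {x y : List α} (h : lev x (b :: y) = lev x y + 1) :
    IsGeodesicStep x (b :: x) (b :: y) :=
  ⟨lev_self_cons b x, by rw [lev_cons_cons_self, h]⟩

theorem isGeodesicStep_substitute {a b : α} (hab : a ≠ b) {x y : List α}
    (h : lev (a :: x) (b :: y) = lev x y + 1) : IsGeodesicStep (a :: x) (b :: x) (b :: y) :=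
  ⟨lev_cons_cons_of_ne_self hab x, by rw [lev_cons_cons_self, h]⟩

theorem exists_isGeodesicStep_length_ge : ∀ x y : List α, x.length ≤ y.length → x ≠ y →
    ∃ z, IsGeodesicStep x z y ∧ x.length ≤ z.length
  | [], [], _, hne => absurd rfl hne
  | [], b :: y, _, _ =>
    ⟨[b], isGeodesicStep_insert (levenshtein_nil_cons ..), by simp⟩
  | _ :: _, [], hlen, _ => by simp at hlen
  | a :: x, b :: y, hlen, hne => by
    by_cases hab : a = b
    · subst hab
      obtain ⟨z, hz, hlen'⟩ :=
        exists_isGeodesicStep_length_ge x y (by simpa using hlen) (by simpa using hne)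
      exact ⟨a :: z, hz.cons a, by simpa using hlen'⟩
    rcases lev_cons_cons_of_ne hab x y with h | h | h
    · obtain ⟨z, hz, hlen'⟩ := exists_isGeodesicStep_length_ge x (b :: y)
        (by simp at hlen ⊢; omega) (by rintro rfl; simp at hlen)
      refine ⟨a :: z, (hz.cons a).extend_target (lev_cons_self a _).le ?_, by simpa using hlen'⟩
      rw [lev_cons_cons_self, h]
    · exact ⟨_, isGeodesicStep_insert h, by simp⟩
    · exact ⟨_, isGeodesicStep_substitute hab h, by simp⟩

theorem exists_isGeodesicStep_length_le : ∀ x y : List α, y.length ≤ x.length → x ≠ y →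
    ∃ z, IsGeodesicStep x z y ∧ z.length ≤ x.length
  | [], [], _, hne => absurd rfl hne
  | [], _ :: _, hlen, _ => by simp at hlen
  | a :: x, [], _, _ =>
    ⟨x, isGeodesicStep_delete (by simp [lev_nil_right]), by simp⟩
  | a :: x, b :: y, hlen, hne => by
    by_cases hab : a = b
    · subst hab
      obtain ⟨z, hz, hlen'⟩ :=
        exists_isGeodesicStep_length_le x y (by simpa using hlen) (by simpa using hne)
      exact ⟨a :: z, hz.cons a, by simpa using hlen'⟩
    rcases lev_cons_cons_of_ne hab x y with h | h | h
    · exact ⟨x, isGeodesicStep_delete h, by simp⟩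
    · obtain ⟨z, hz, hlen'⟩ := exists_isGeodesicStep_length_le (a :: x) y
        (by simp at hlen ⊢; omega) (by rintro rfl; simp at hlen)
      exact ⟨z, hz.extend_target (lev_self_cons b y).le h, hlen'⟩
    · exact ⟨_, isGeodesicStep_substitute hab h, by simp⟩

theorem exists_isGeodesicStep_length_mem_band {k₁ k₂ : ℕ} (hk : k₁ < k₂) {x y : List α}
    (hx₁ : k₁ ≤ x.length) (hx₂ : x.length ≤ k₂) (hy₁ : k₁ ≤ y.length) (hy₂ : y.length ≤ k₂)
    (hne : x ≠ y) :
    ∃ z, IsGeodesicStep x z y ∧ k₁ ≤ z.length ∧ z.length ≤ k₂ := by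
  by_cases hup : x.length < k₂ ∧ x.length ≤ y.length
  · obtain ⟨z, hz, hlen⟩ := exists_isGeodesicStep_length_ge x y hup.2 hne
    have := (length_le_lev x z).1
    rw [hz.1] at this
    exact ⟨z, hz, by omega, by omega⟩
  · rw [not_and_or, not_lt, not_le] at hup
    obtain ⟨z, hz, hlen⟩ := exists_isGeodesicStep_length_le x y (by omega) hne
    have := (length_le_lev x z).2
    rw [hz.1] at this
    exact ⟨z, hz, by omega, by omega⟩

end DefaultCost

theorem levGraph_adj_of_lev_eq_one {a k₁ k₂ : ℕ} {u v : LevVertex a k₁ k₂}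
    (h : levenshtein defaultCost u.1 v.1 = 1) : (levGraph a k₁ k₂).Adj u v := by
  refine (SimpleGraph.fromRel_adj _ _ _).mpr ⟨?_, Or.inl h⟩
  rintro rfl
  rw [lev_self] at h
  exact zero_ne_one h

theorem levGraph_exists_walk_length_eq_lev {a k₁ k₂ : ℕ} (hk : k₁ < k₂) (u v : LevVertex a k₁ k₂) :
    ∃ p : (levGraph a k₁ k₂).Walk u v, p.length = levenshtein defaultCost u.1 v.1 := by
  induction h : levenshtein defaultCost u.1 v.1 generalizing u with
  | zero =>
    obtain rfl : u = v := Subtype.ext (eq_of_lev_eq_zero h)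
    exact ⟨.nil, rfl⟩
  | succ n ih =>
    have hne : u.1 ≠ v.1 := by
      intro huv
      rw [huv, lev_self] at h
      exact n.zero_ne_add_one h
    obtain ⟨z, hz, hz₁, hz₂⟩ := exists_isGeodesicStep_length_mem_band hk u.2.1 u.2.2 v.2.1 v.2.2 hne
    obtain ⟨p, hp⟩ := ih ⟨z, hz₁, hz₂⟩ (by have := hz.2; simp only at this ⊢; omega)
    exact ⟨.cons (levGraph_adj_of_lev_eq_one hz.1) p, congrArg (· + 1) hp⟩

/-- if `k₁ < k₂` and `a ≥ 2`, between any two vertices of `L_{k₁,k₂;a}`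
there is a walk of length exactly their Levenshtein distance; in particular the
graph is connected. -/
theorem levGraph_walk_of_length_lev (a k₁ k₂ : ℕ) (ha : 2 ≤ a) (hk : k₁ < k₂)
    (u v : LevVertex a k₁ k₂) :
    (∃ p : (levGraph a k₁ k₂).Walk u v,
        p.length = levenshtein Levenshtein.defaultCost u.1 v.1) ∧
      (levGraph a k₁ k₂).Connected := by
  have : Nonempty (LevVertex a k₁ k₂) :=
    ⟨⟨List.replicate k₁ ⟨0, by omega⟩, by simp, by simp; omega⟩⟩
  refine ⟨levGraph_exists_walk_length_eq_lev hk u v, ⟨fun x y => ?_⟩⟩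
  obtain ⟨p, -⟩ := levGraph_exists_walk_length_eq_lev hk x y
  exact p.reachable
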